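/- For four modes with k₁+k₂+k₃+k₄ = 0, the paired Jacobiator of the YM bracket equals the sum of three pairings of YM brackets: B([[ξ₁,ξ₂]_YM,ξ₃]_YM + [[ξ₂,ξ₃]_YM,ξ₁]_YM + [[ξ₃,ξ₁]_YM,ξ₂]_YM, ξ₄) = B([ξ₁,ξ₂]_YM, [ξ₃,ξ₄]_YM) + B([ξ₂,ξ₃]_YM, [ξ₁,ξ₄]_YM) + B([ξ₃,ξ₁]_YM, [ξ₂,ξ₄]_YM). -/

import Mathlib

/-!
The pairing is invariant under the YM bracket: `B([p, q], r) = B(p, [q, r])` whenever the momenta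
of `p`, `q`, `r` sum to zero. Each term of the paired Jacobiator is such a pairing with `r = ξ₄`,
so bilinearity of `B` and three applications of invariance give the identity.
-/

namespace Stmt9

variable {V : Type*} [AddCommGroup V] [Module ℝ V]

/-- The YM bracket of modes. -/
def ymMode (B : LinearMap.BilinForm ℝ V) (p q : V × V) : V × V :=
  ((2 * B p.1 q.2) • q.1 - (2 * B q.1 p.2) • p.1 + B p.1 q.1 • (p.2 - q.2)
    + B p.1 p.2 • q.1 - B q.1 q.2 • p.1, p.2 + q.2)

theorem ymMode_pairing_invariant {B : LinearMap.BilinForm ℝ V} (hB : B.IsSymm)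
    (p q r : V × V) (h : p.2 + q.2 + r.2 = 0) :
    B (ymMode B p q).1 r.1 = B p.1 (ymMode B q r).1 := by
  obtain ⟨a, ka⟩ := p
  obtain ⟨b, kb⟩ := q
  obtain ⟨c, kc⟩ := r
  obtain rfl : kc = -(ka + kb) := eq_neg_of_add_eq_zero_right h
  simp only [ymMode, map_add, map_sub, map_smul, map_neg, LinearMap.add_apply,
    LinearMap.sub_apply, LinearMap.smul_apply, smul_eq_mul]
  -- once `kc` is eliminated, the sides differ only in the argument order of `B c kb` and `B c ka`
  linear_combination (B a b) * (hB.eq c kb - hB.eq c ka)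

/-- For four modes with `k₁+k₂+k₃+k₄ = 0`, the paired Jacobiator of the YM
bracket equals the sum of the three pairings of YM brackets. -/
theorem ym_jacobiator_as_pairings (B : LinearMap.BilinForm ℝ V) (hB : B.IsSymm)
    (ξ₁ k₁ ξ₂ k₂ ξ₃ k₃ ξ₄ k₄ : V) (h : k₁ + k₂ + k₃ + k₄ = 0) :
    B ((ymMode B (ymMode B (ξ₁, k₁) (ξ₂, k₂)) (ξ₃, k₃)).1
        + (ymMode B (ymMode B (ξ₂, k₂) (ξ₃, k₃)) (ξ₁, k₁)).1
        + (ymMode B (ymMode B (ξ₃, k₃) (ξ₁, k₁)) (ξ₂, k₂)).1) ξ₄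
      = B (ymMode B (ξ₁, k₁) (ξ₂, k₂)).1 (ymMode B (ξ₃, k₃) (ξ₄, k₄)).1
        + B (ymMode B (ξ₂, k₂) (ξ₃, k₃)).1 (ymMode B (ξ₁, k₁) (ξ₄, k₄)).1
        + B (ymMode B (ξ₃, k₃) (ξ₁, k₁)).1 (ymMode B (ξ₂, k₂) (ξ₄, k₄)).1 := by
  rw [map_add, map_add, LinearMap.add_apply, LinearMap.add_apply]
  congr 1
  · congr 1
    · exact ymMode_pairing_invariant hB _ (ξ₃, k₃) (ξ₄, k₄) h
    · exact ymMode_pairing_invariant hB _ (ξ₁, k₁) (ξ₄, k₄)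
        (by show k₂ + k₃ + k₁ + k₄ = 0; rw [← h]; abel)
  · exact ymMode_pairing_invariant hB _ (ξ₂, k₂) (ξ₄, k₄)
      (by show k₃ + k₁ + k₂ + k₄ = 0; rw [← h]; abel)

end Stmt9
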